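/- Let A, B be n×n complex positive definite matrices. For every t ∈ (0, 1): (A^{-1} ◇_t B^{-1})^{-1} ⪯ A ♮_t B and (A^{-1} ◇_t B^{-1})^{-1} ⪯ A ◇_t B in the near order, and either equality holds if and only if A = B. -/

import Mathlib

/-!
Put `C = A⁻¹ ♯ B`; it is the unique positive definite solution of the Riccati equation
`C * A * C = B`, and `A = B` iff `C = 1`. The three matrices `(A⁻¹ ◇ₜ B⁻¹)⁻¹`, `A ♮ₜ B` and
`A ◇ₜ B` are the congruences `φ(C) A φ(C)` for the harmonic, geometric and arithmetic means
`φ(x) = (1 - t + t x⁻¹)⁻¹, xᵗ, 1 - t + t x` of `1` and `x`. Since `ψ/φ(C)` solves the Riccati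
equation between `φ(C) A φ(C)` and `ψ(C) A ψ(C)`, uniqueness gives
`(φ(C) A φ(C))⁻¹ ♯ (ψ(C) A ψ(C)) = (ψ/φ)(C)`, so the near order and its equality case reduce to the
scalar inequalities `HM < GM < AM` on the spectrum of `C` away from `x = 1`.
-/

open scoped ComplexOrder Matrix

noncomputable section

/-- Real power of a (positive definite) matrix via the continuous functional calculus. -/
def mpow {n : ℕ} (A : Matrix (Fin n) (Fin n) ℂ) (t : ℝ) : Matrix (Fin n) (Fin n) ℂ :=
  cfc (fun x : ℝ => x ^ t) A

/-- The matrix logarithm of a (positive definite) matrix via the continuous functional calculus. -/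
def mlog {n : ℕ} (A : Matrix (Fin n) (Fin n) ℂ) : Matrix (Fin n) (Fin n) ℂ :=
  cfc Real.log A

/-- The metric geometric mean `A ♯ₜ B = A^{1/2} (A^{-1/2} B A^{-1/2})^t A^{1/2}`.
`A ♯ B` is `gmean A B (1/2)`. -/
def gmean {n : ℕ} (A B : Matrix (Fin n) (Fin n) ℂ) (t : ℝ) : Matrix (Fin n) (Fin n) ℂ :=
  mpow A (1/2) * mpow (mpow A (-(1/2)) * B * mpow A (-(1/2))) t * mpow A (1/2)

/-- The Loewner order: `A ≤ B` iff `B - A` is positive semidefinite. -/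
def LoewnerLE {n : ℕ} (A B : Matrix (Fin n) (Fin n) ℂ) : Prop :=
  (B - A).PosSemidef

/-- The near order: `A ⪯ B` iff `I ≤ A⁻¹ ♯ B` in the Loewner order. -/
def NearLE {n : ℕ} (A B : Matrix (Fin n) (Fin n) ℂ) : Prop :=
  LoewnerLE 1 (gmean A⁻¹ B (1/2))

/-- The spectral geometric mean `A ♮ₜ B = (A⁻¹ ♯ B)^t A (A⁻¹ ♯ B)^t`. -/
def smean {n : ℕ} (A B : Matrix (Fin n) (Fin n) ℂ) (t : ℝ) : Matrix (Fin n) (Fin n) ℂ :=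
  mpow (gmean A⁻¹ B (1/2)) t * A * mpow (gmean A⁻¹ B (1/2)) t

/-- The Wasserstein mean `A ◇ₜ B = [(1-t)I + t(A⁻¹ ♯ B)] A [(1-t)I + t(A⁻¹ ♯ B)]`. -/
def wmean {n : ℕ} (A B : Matrix (Fin n) (Fin n) ℂ) (t : ℝ) : Matrix (Fin n) (Fin n) ℂ :=
  (((1 - t : ℝ) : ℂ) • (1 : Matrix (Fin n) (Fin n) ℂ) + ((t : ℝ) : ℂ) • gmean A⁻¹ B (1/2)) * A *
    (((1 - t : ℝ) : ℂ) • (1 : Matrix (Fin n) (Fin n) ℂ) + ((t : ℝ) : ℂ) • gmean A⁻¹ B (1/2))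

/-- The arithmetic mean `A ∇ₜ B = (1-t)A + tB`. -/
def amean {n : ℕ} (A B : Matrix (Fin n) (Fin n) ℂ) (t : ℝ) : Matrix (Fin n) (Fin n) ℂ :=
  ((1 - t : ℝ) : ℂ) • A + ((t : ℝ) : ℂ) • B

/-- The matrix absolute value `|X| = (XᴴX)^{1/2}`. -/
def matAbs {n : ℕ} (X : Matrix (Fin n) (Fin n) ℂ) : Matrix (Fin n) (Fin n) ℂ :=
  mpow (Xᴴ * X) (1/2)

/-- The eigenvalues of a Hermitian matrix listed in nonincreasing order:
`eigDesc hA i` is `λ_{i+1}(A)`, so `eigDesc hA 0 = λ₁(A) ≥ eigDesc hA 1 = λ₂(A) ≥ ⋯`. -/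
def eigDesc {n : ℕ} {A : Matrix (Fin n) (Fin n) ℂ} (hA : A.IsHermitian) : Fin n → ℝ :=
  fun i => (hA.eigenvalues ∘ Tuple.sort hA.eigenvalues) i.rev

open scoped MatrixOrder

lemma one_sub_add_mul_pos {t x : ℝ} (ht0 : 0 ≤ t) (ht1 : t ≤ 1) (hx : 0 < x) :
    0 < 1 - t + t * x := by
  rcases ht0.eq_or_lt with rfl | ht0
  · norm_num
  · nlinarith [mul_pos ht0 hx]

lemma Real.rpow_lt_one_sub_add_mul {t x : ℝ} (ht0 : 0 < t) (ht1 : t < 1) (hx : 0 ≤ x)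
    (hx1 : x ≠ 1) : x ^ t < 1 - t + t * x := by
  have h := rpow_one_add_lt_one_add_mul_self (s := x - 1) (by linarith)
    (sub_ne_zero.mpr hx1) ht0 ht1
  rwa [add_sub_cancel, show 1 + t * (x - 1) = 1 - t + t * x by ring] at h

lemma Real.inv_one_sub_add_mul_inv_lt_rpow {t x : ℝ} (ht0 : 0 < t) (ht1 : t < 1) (hx : 0 < x)
    (hx1 : x ≠ 1) : (1 - t + t * x⁻¹)⁻¹ < x ^ t := by
  have h := Real.rpow_lt_one_sub_add_mul ht0 ht1 (inv_pos.mpr hx).le (inv_ne_one.mpr hx1)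
  rw [Real.inv_rpow hx.le] at h
  exact (inv_lt_comm₀ (Real.rpow_pos_of_pos hx t)
    (one_sub_add_mul_pos ht0.le ht1.le (inv_pos.mpr hx))).mp h

namespace Matrix

variable {𝕜 ι : Type*} [RCLike 𝕜] [Fintype ι] [DecidableEq ι] {A H : Matrix ι ι 𝕜}

lemma continuousOn_real_spectrum (A : Matrix ι ι 𝕜) (f : ℝ → ℝ) :
    ContinuousOn f (spectrum ℝ A) :=
  A.finite_real_spectrum.continuousOn f

lemma PosDef.pos_of_mem_spectrum (hA : A.PosDef) {x : ℝ} (hx : x ∈ spectrum ℝ A) : 0 < x :=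
  hA.isStrictlyPositive.spectrum_pos hx

lemma posSemidef_cfc {f : ℝ → ℝ} (hf : ∀ x ∈ spectrum ℝ A, 0 ≤ f x) :
    (cfc f A).PosSemidef :=
  nonneg_iff_posSemidef.mp (cfc_nonneg hf)

lemma PosDef.mul_mul_of_posDef (hA : A.PosDef) (hH : H.PosDef) : (H * A * H).PosDef := by
  simpa [star_eq_conjTranspose, hH.1.eq] using
    (IsUnit.posDef_star_right_conjugate_iff hH.isUnit).mpr hA

lemma inv_mul_mul_mul_inv_cancel (hH : IsUnit H) (A : Matrix ι ι 𝕜) :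
    H⁻¹ * (H * A * H) * H⁻¹ = A := by
  rw [isUnit_iff_isUnit_det] at hH
  rw [← mul_assoc, mul_nonsing_inv_cancel_right _ _ hH, nonsing_inv_mul_cancel_left _ _ hH]

namespace IsHermitian

variable (hA : A.IsHermitian) {f : ℝ → ℝ}
include hA

lemma posDef_cfc (hf : ∀ x ∈ spectrum ℝ A, 0 < f x) : (cfc f A).PosDef :=
  isStrictlyPositive_iff_posDef.mp <|
    (cfc_isStrictlyPositive_iff f A (A.continuousOn_real_spectrum f)).mpr hf

lemma inv_cfc (hf : ∀ x ∈ spectrum ℝ A, f x ≠ 0) :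
    (cfc f A)⁻¹ = cfc (fun x => (f x)⁻¹) A := by
  rw [nonsing_inv_eq_ringInverse]
  exact (cfc_inv f A hf (A.continuousOn_real_spectrum f)).symm

lemma eq_one_iff : A = 1 ↔ ∀ x ∈ spectrum ℝ A, x = 1 := by
  conv_lhs => rw [← cfc_id' ℝ A, ← cfc_const_one ℝ A]
  exact cfc_eq_cfc_iff_eqOn hA (A.continuousOn_real_spectrum _) (A.continuousOn_real_spectrum _)

end IsHermitian

lemma PosDef.inv_eq_cfc (hA : A.PosDef) : A⁻¹ = cfc (fun x : ℝ => x⁻¹) A := by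
  conv_lhs => rw [← cfc_id' ℝ A hA.1.isSelfAdjoint]
  exact hA.1.inv_cfc fun x hx => (hA.pos_of_mem_spectrum hx).ne'

end Matrix

section Power

variable {n : ℕ} {A : Matrix (Fin n) (Fin n) ℂ}

lemma mpow_posDef (hA : A.PosDef) (t : ℝ) : (mpow A t).PosDef :=
  hA.1.posDef_cfc fun _ hx => Real.rpow_pos_of_pos (hA.pos_of_mem_spectrum hx) t

lemma mpow_add (hA : A.PosDef) (s t : ℝ) : mpow A s * mpow A t = mpow A (s + t) := by
  rw [mpow, mpow, mpow, ← cfc_mul _ _ A (A.continuousOn_real_spectrum _)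
    (A.continuousOn_real_spectrum _)]
  exact cfc_congr fun x hx => (Real.rpow_add (hA.pos_of_mem_spectrum hx) s t).symm

lemma mpow_half_mul_self (hA : A.PosDef) : mpow A (1/2) * mpow A (1/2) = A := by
  rw [mpow_add hA, add_halves, mpow]
  simp only [Real.rpow_one]
  exact cfc_id' ℝ A hA.1

lemma mpow_neg (hA : A.PosDef) (t : ℝ) : mpow A (-t) = (mpow A t)⁻¹ := by
  rw [mpow, mpow, hA.1.inv_cfc fun x hx => (Real.rpow_pos_of_pos (hA.pos_of_mem_spectrum hx) t).ne']
  exact cfc_congr fun x hx => Real.rpow_neg (hA.pos_of_mem_spectrum hx).le t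

lemma mpow_inv (hA : A.PosDef) (t : ℝ) : mpow A⁻¹ t = mpow A (-t) := by
  rw [mpow, mpow, hA.inv_eq_cfc, ← cfc_comp' (fun x : ℝ => x ^ t) (fun x : ℝ => x⁻¹) A
    ((A.finite_real_spectrum.image _).continuousOn _) (A.continuousOn_real_spectrum _)
    hA.1.isSelfAdjoint]
  exact cfc_congr fun x hx => by
    rw [Real.inv_rpow (hA.pos_of_mem_spectrum hx).le, Real.rpow_neg (hA.pos_of_mem_spectrum hx).le]

lemma mpow_mul_self_half (hA : A.PosDef) : mpow (A * A) (1/2) = A := by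
  have hsq : A * A = cfc (fun x : ℝ => x * x) A := by
    rw [cfc_mul _ _ A (A.continuousOn_real_spectrum _) (A.continuousOn_real_spectrum _),
      cfc_id' ℝ A hA.1.isSelfAdjoint]
  rw [mpow, hsq, ← cfc_comp' (fun x : ℝ => x ^ (1/2 : ℝ)) (fun x : ℝ => x * x) A
    ((A.finite_real_spectrum.image _).continuousOn _) (A.continuousOn_real_spectrum _)
    hA.1.isSelfAdjoint]
  conv_rhs => rw [← cfc_id' ℝ A hA.1.isSelfAdjoint]
  exact cfc_congr fun x hx => by
    rw [← Real.sqrt_eq_rpow, Real.sqrt_mul_self (hA.pos_of_mem_spectrum hx).le]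

end Power

section GeometricMean

variable {n : ℕ} {A B Z : Matrix (Fin n) (Fin n) ℂ}

lemma gmean_inv_left (hA : A.PosDef) (B : Matrix (Fin n) (Fin n) ℂ) :
    gmean A⁻¹ B (1/2) = (mpow A (1/2))⁻¹ * mpow (mpow A (1/2) * B * mpow A (1/2)) (1/2) *
      (mpow A (1/2))⁻¹ := by
  rw [gmean, mpow_inv hA, mpow_inv hA, neg_neg, mpow_neg hA]

lemma gmean_inv_left_mul_mul (hA : A.PosDef) (hZ : Z.PosDef) :
    gmean A⁻¹ (Z * A * Z) (1/2) = Z := by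
  have hR := mpow_posDef hA (1/2)
  rw [gmean_inv_left hA]
  set R := mpow A (1/2)
  have hRR : R * R = A := mpow_half_mul_self hA
  have hsq : R * (Z * A * Z) * R = (R * Z * R) * (R * Z * R) := by
    rw [← hRR]
    simp only [mul_assoc]
  rw [hsq, mpow_mul_self_half (hZ.mul_mul_of_posDef hR),
    Matrix.inv_mul_mul_mul_inv_cancel hR.isUnit Z]

lemma gmean_inv_left_posDef (hA : A.PosDef) (hB : B.PosDef) : (gmean A⁻¹ B (1/2)).PosDef := by
  have hR := mpow_posDef hA (1/2)
  rw [gmean_inv_left hA]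
  exact (mpow_posDef (hB.mul_mul_of_posDef hR) _).mul_mul_of_posDef hR.inv

lemma gmean_inv_left_mul_mul_self (hA : A.PosDef) (hB : B.PosDef) :
    gmean A⁻¹ B (1/2) * A * gmean A⁻¹ B (1/2) = B := by
  have hR := mpow_posDef hA (1/2)
  have hdet : IsUnit (mpow A (1/2)).det := hR.isUnit.map Matrix.detMonoidHom
  rw [gmean_inv_left hA]
  set R := mpow A (1/2)
  set S := mpow (R * B * R) (1/2)
  have hRR : R * R = A := mpow_half_mul_self hA
  calc R⁻¹ * S * R⁻¹ * A * (R⁻¹ * S * R⁻¹)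
      = R⁻¹ * (S * (R⁻¹ * R) * (R * R⁻¹) * S) * R⁻¹ := by
        rw [← hRR]
        simp only [mul_assoc]
    _ = R⁻¹ * (R * B * R) * R⁻¹ := by
        rw [Matrix.nonsing_inv_mul _ hdet, Matrix.mul_nonsing_inv _ hdet, mul_one, mul_one,
          mpow_half_mul_self (hB.mul_mul_of_posDef hR)]
    _ = B := Matrix.inv_mul_mul_mul_inv_cancel hR.isUnit B

lemma gmean_inv_left_eq_one_iff (hA : A.PosDef) (hB : B.PosDef) :
    gmean A⁻¹ B (1/2) = 1 ↔ A = B := by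
  refine ⟨fun h => ?_, fun h => ?_⟩
  · have hCAC := gmean_inv_left_mul_mul_self hA hB
    rwa [h, one_mul, mul_one] at hCAC
  · subst h
    simpa using gmean_inv_left_mul_mul hA Matrix.PosDef.one

lemma gmean_inv_inv (hA : A.PosDef) (hB : B.PosDef) :
    gmean A⁻¹⁻¹ B⁻¹ (1/2) = (gmean A⁻¹ B (1/2))⁻¹ := by
  have hC := gmean_inv_left_posDef hA hB
  have hB' : B⁻¹ = (gmean A⁻¹ B (1/2))⁻¹ * A⁻¹ * (gmean A⁻¹ B (1/2))⁻¹ := by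
    rw [← Matrix.mul_inv_rev, ← Matrix.mul_inv_rev, ← mul_assoc,
      gmean_inv_left_mul_mul_self hA hB]
  rw [hB']
  exact gmean_inv_left_mul_mul hA.inv hC.inv

end GeometricMean

section Congruence

variable {n : ℕ} {A C : Matrix (Fin n) (Fin n) ℂ} {f g : ℝ → ℝ}

lemma gmean_inv_cfc_conj (hA : A.PosDef) (hC : C.PosDef)
    (hf : ∀ x ∈ spectrum ℝ C, 0 < f x) (hg : ∀ x ∈ spectrum ℝ C, 0 < g x) :
    gmean (cfc f C * A * cfc f C)⁻¹ (cfc g C * A * cfc g C) (1/2) =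
      cfc (fun x => g x / f x) C := by
  have hQf : cfc (fun x => g x / f x) C * cfc f C = cfc g C := by
    rw [← cfc_mul _ _ C (C.continuousOn_real_spectrum _) (C.continuousOn_real_spectrum _)]
    exact cfc_congr fun x hx => div_mul_cancel₀ _ (hf x hx).ne'
  have hfQ : cfc f C * cfc (fun x => g x / f x) C = cfc g C :=
    (cfc_commute_cfc _ _ C).eq.symm.trans hQf
  set Q := cfc (fun x => g x / f x) C
  have hconj : Q * (cfc f C * A * cfc f C) * Q = cfc g C * A * cfc g C :=
    calc _ = (Q * cfc f C) * A * (cfc f C * Q) := by simp only [mul_assoc]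
      _ = cfc g C * A * cfc g C := by rw [hQf, hfQ]
  rw [← hconj]
  exact gmean_inv_left_mul_mul (hA.mul_mul_of_posDef (hC.1.posDef_cfc hf))
    (hC.1.posDef_cfc fun x hx => div_pos (hg x hx) (hf x hx))

lemma nearLE_cfc_conj_and_eq_iff (hA : A.PosDef) (hC : C.PosDef)
    (hf : ∀ x ∈ spectrum ℝ C, 0 < f x) (hlt : ∀ x ∈ spectrum ℝ C, x ≠ 1 → f x < g x)
    (h1 : f 1 = g 1) :
    NearLE (cfc f C * A * cfc f C) (cfc g C * A * cfc g C) ∧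
      (cfc f C * A * cfc f C = cfc g C * A * cfc g C ↔ C = 1) := by
  have hle : ∀ x ∈ spectrum ℝ C, f x ≤ g x := fun x hx => by
    rcases eq_or_ne x 1 with rfl | hx1
    exacts [h1.le, (hlt x hx hx1).le]
  have hg : ∀ x ∈ spectrum ℝ C, 0 < g x := fun x hx => (hf x hx).trans_le (hle x hx)
  have hmean := gmean_inv_cfc_conj hA hC hf hg
  refine ⟨?_, fun h => ?_, ?_⟩
  · rw [NearLE, LoewnerLE, hmean, ← cfc_const_one ℝ C,
      ← cfc_sub _ _ C (C.continuousOn_real_spectrum _) (C.continuousOn_real_spectrum _)]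
    exact Matrix.posSemidef_cfc fun x hx =>
      sub_nonneg.mpr ((one_le_div (hf x hx)).mpr (hle x hx))
  · have hY := hA.mul_mul_of_posDef (hC.1.posDef_cfc hg)
    rw [h, (gmean_inv_left_eq_one_iff hY hY).mpr rfl,
      ← cfc_const_one ℝ C, eq_comm, cfc_eq_cfc_iff_eqOn hC.1.isSelfAdjoint
        (C.continuousOn_real_spectrum _) (C.continuousOn_real_spectrum _)] at hmean
    refine hC.1.eq_one_iff.mpr fun x hx => ?_
    by_contra hx1
    have hfg : g x / f x = 1 := hmean hx
    rw [div_eq_one_iff_eq (hf x hx).ne'] at hfg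
    exact (hlt x hx hx1).ne hfg.symm
  · rintro rfl
    rw [cfc_apply_one, cfc_apply_one, h1]

end Congruence

section Means

variable {n : ℕ} {A B : Matrix (Fin n) (Fin n) ℂ}

lemma cfc_const_add_const_mul {C : Matrix (Fin n) (Fin n) ℂ} (hC : C.IsHermitian) (a b : ℝ)
    (f : ℝ → ℝ) :
    cfc (fun x => a + b * f x) C =
      (a : ℂ) • (1 : Matrix (Fin n) (Fin n) ℂ) + (b : ℂ) • cfc f C := by
  rw [cfc_const_add a _ C (C.continuousOn_real_spectrum _) hC.isSelfAdjoint,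
    cfc_const_mul b f C (C.continuousOn_real_spectrum _), Algebra.algebraMap_eq_smul_one,
    Complex.coe_smul, Complex.coe_smul]

lemma smean_eq_cfc_conj (t : ℝ) :
    smean A B t = cfc (fun x : ℝ => x ^ t) (gmean A⁻¹ B (1/2)) * A *
      cfc (fun x : ℝ => x ^ t) (gmean A⁻¹ B (1/2)) :=
  rfl

lemma wmean_eq_cfc_conj (hA : A.PosDef) (hB : B.PosDef) (t : ℝ) :
    wmean A B t = cfc (fun x => 1 - t + t * x) (gmean A⁻¹ B (1/2)) * A *
      cfc (fun x => 1 - t + t * x) (gmean A⁻¹ B (1/2)) := by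
  have hC := (gmean_inv_left_posDef hA hB).1
  rw [wmean, cfc_const_add_const_mul hC, cfc_id' ℝ _ hC.isSelfAdjoint]

lemma inv_wmean_inv_eq_cfc_conj (hA : A.PosDef) (hB : B.PosDef) {t : ℝ} (ht0 : 0 ≤ t)
    (ht1 : t ≤ 1) :
    (wmean A⁻¹ B⁻¹ t)⁻¹ =
      cfc (fun x => (1 - t + t * x⁻¹)⁻¹) (gmean A⁻¹ B (1/2)) * A *
      cfc (fun x => (1 - t + t * x⁻¹)⁻¹) (gmean A⁻¹ B (1/2)) := by
  have hC := gmean_inv_left_posDef hA hB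
  rw [wmean, gmean_inv_inv hA hB, hC.inv_eq_cfc, ← cfc_const_add_const_mul hC.1,
    Matrix.mul_inv_rev, Matrix.mul_inv_rev,
    Matrix.nonsing_inv_nonsing_inv A ((Matrix.isUnit_iff_isUnit_det A).mp hA.isUnit),
    hC.1.inv_cfc fun x hx => (one_sub_add_mul_pos ht0 ht1 (inv_pos.mpr
      (hC.pos_of_mem_spectrum hx))).ne', mul_assoc]

end Means

/-- for `t ∈ (0,1)`, `(A⁻¹ ◇ₜ B⁻¹)⁻¹ ⪯ A ♮ₜ B` and
`(A⁻¹ ◇ₜ B⁻¹)⁻¹ ⪯ A ◇ₜ B`, with either equality iff `A = B`. -/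
theorem inv_wmean_inv_near_le {n : ℕ} (A B : Matrix (Fin n) (Fin n) ℂ)
    (hA : A.PosDef) (hB : B.PosDef) :
    ∀ t : ℝ, 0 < t → t < 1 →
      NearLE (wmean A⁻¹ B⁻¹ t)⁻¹ (smean A B t) ∧
      NearLE (wmean A⁻¹ B⁻¹ t)⁻¹ (wmean A B t) ∧
      ((wmean A⁻¹ B⁻¹ t)⁻¹ = smean A B t ↔ A = B) ∧
      ((wmean A⁻¹ B⁻¹ t)⁻¹ = wmean A B t ↔ A = B) := by
  intro t ht0 ht1
  have hC := gmean_inv_left_posDef hA hB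
  have hharm_lt_geom : ∀ x ∈ spectrum ℝ (gmean A⁻¹ B (1/2)), x ≠ 1 →
      (1 - t + t * x⁻¹)⁻¹ < x ^ t := fun x hx hx1 =>
    Real.inv_one_sub_add_mul_inv_lt_rpow ht0 ht1 (hC.pos_of_mem_spectrum hx) hx1
  have hharm_pos : ∀ x ∈ spectrum ℝ (gmean A⁻¹ B (1/2)), 0 < (1 - t + t * x⁻¹)⁻¹ :=
    fun x hx => inv_pos.mpr <|
      one_sub_add_mul_pos ht0.le ht1.le (inv_pos.mpr (hC.pos_of_mem_spectrum hx))
  obtain ⟨hsmean, hsmean_eq⟩ :=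
    nearLE_cfc_conj_and_eq_iff hA hC hharm_pos hharm_lt_geom (by norm_num)
  obtain ⟨hwmean, hwmean_eq⟩ := nearLE_cfc_conj_and_eq_iff hA hC hharm_pos
    (fun x hx hx1 => (hharm_lt_geom x hx hx1).trans <|
      Real.rpow_lt_one_sub_add_mul ht0 ht1 (hC.pos_of_mem_spectrum hx).le hx1) (by norm_num)
  rw [inv_wmean_inv_eq_cfc_conj hA hB ht0.le ht1.le, smean_eq_cfc_conj, wmean_eq_cfc_conj hA hB,
    ← gmean_inv_left_eq_one_iff hA hB]
  exact ⟨hsmean, hwmean, hsmean_eq, hwmean_eq⟩
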